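/- Let each ψ_i be μ_ψ-strongly convex and L_ψ-smooth, and ω be μ_ω-strongly convex and L_ω-smooth and block separable over ℬ (allowing μ_ψ = μ_ω = 0), and set μ = μ_ψ + μ_ω. Then for all x, y, f(x) ≥ f(y) + ⟨∇f(y), x − y⟩ + (1/(2n(L_f − μ))) ∑_{i=1}^n ‖∇ξ_i(x) − ∇ξ_i(y)‖² + (μ L_f/(2 d_max (L_f − μ))) ‖x − y‖² + (μ/(L_f − μ)) ⟨∇f(x) − ∇f(y), y − x⟩. -/

import Mathlib

/-! Each `ξᵢ` is `L_f`-smooth, its gradient lives on the coordinates of the blocks in `Tᵢ`,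
and along those coordinates it is `μ`-strongly convex: the weights `d_B ≥ 1` only increase the
modulus that `ω_B` inherits from `ω` on its own block. For such a function the classical proof of
the interpolation inequality for smooth strongly convex functions (compare the smoothness upper
bound and the strong convexity lower bound at a single gradient step) goes through with
`‖x - y‖²` replaced by `‖P_{Tᵢ}(x - y)‖²`, where `P_{Tᵢ}` masks the other coordinates. Averaging
over `i` recovers `f`, and `∑ᵢ ‖P_{Tᵢ} z‖² ≥ (n / d_max) ‖z‖²` because each block lies in
`n / d_B ≥ n / d_max` of the sets `Tᵢ`. -/

open Finset
open scoped RealInnerProductSpace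

noncomputable section

variable {p : ℕ}

/-- `f` is `μ`-strongly convex (on all of `ℝ^p`). -/
def StrongConvexOnR (μ : ℝ) (f : EuclideanSpace ℝ (Fin p) → ℝ) : Prop :=
  ∀ x y : EuclideanSpace ℝ (Fin p), ∀ a b : ℝ, 0 ≤ a → 0 ≤ b → a + b = 1 →
    f (a • x + b • y) ≤ a * f x + b * f y - μ / 2 * (a * b) * ‖x - y‖ ^ 2

section Calculus

variable {E : Type*} [NormedAddCommGroup E] [InnerProductSpace ℝ E] [CompleteSpace E]
  {f g : E → ℝ} {f' g' x y : E}

lemma HasGradientAt.add (hf : HasGradientAt f f' x) (hg : HasGradientAt g g' x) :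
    HasGradientAt (fun z => f z + g z) (f' + g') x := by
  rw [hasGradientAt_iff_hasFDerivAt, map_add]
  exact hf.hasFDerivAt.add hg.hasFDerivAt

lemma HasGradientAt.const_mul (c : ℝ) (hf : HasGradientAt f f' x) :
    HasGradientAt (fun z => c * f z) (c • f') x := by
  rw [hasGradientAt_iff_hasFDerivAt, map_smul]
  exact hf.hasFDerivAt.const_mul c

lemma HasGradientAt.sum {ι : Type*} {s : Finset ι} {F : ι → E → ℝ} {F' : ι → E}
    (h : ∀ k ∈ s, HasGradientAt (F k) (F' k) x) :
    HasGradientAt (fun z => ∑ k ∈ s, F k z) (∑ k ∈ s, F' k) x := by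
  rw [hasGradientAt_iff_hasFDerivAt, map_sum]
  exact HasFDerivAt.fun_sum fun k hk => (h k hk).hasFDerivAt

lemma HasGradientAt.add_sum_const_mul {ι : Type*} {s : Finset ι} {F : ι → E → ℝ} {F' : ι → E}
    (c : ι → ℝ) (hf : HasGradientAt f f' x) (h : ∀ k ∈ s, HasGradientAt (F k) (F' k) x) :
    HasGradientAt (fun z => f z + ∑ k ∈ s, c k * F k z) (f' + ∑ k ∈ s, c k • F' k) x :=
  hf.add (HasGradientAt.sum fun k hk => (h k hk).const_mul (c k))

lemma HasGradientAt.hasDerivAt_comp_lineMap {t : ℝ}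
    (hf : HasGradientAt f f' (AffineMap.lineMap y x t)) :
    HasDerivAt (fun s : ℝ => f (AffineMap.lineMap y x s)) ⟪f', x - y⟫ t := by
  have hline : HasDerivAt (fun s : ℝ => AffineMap.lineMap y x s) (x - y) t :=
    AffineMap.hasDerivAt_lineMap
  exact hf.hasFDerivAt.comp_hasDerivAt t hline

lemma HasGradientAt.inner_eq_zero_of_forall_add_smul_eq {v : E}
    (hf : HasGradientAt f f' x) (hconst : ∀ t : ℝ, f (x + t • v) = f x) : ⟪f', v⟫ = 0 := by
  have hderiv := HasGradientAt.hasDerivAt_comp_lineMap (x := x + v) (y := x) (t := 0)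
    (by simpa using hf)
  simp only [AffineMap.lineMap_apply_module', add_sub_cancel_left, add_comm _ x, hconst]
    at hderiv
  exact hderiv.unique (hasDerivAt_const _ _)

lemma ConvexOn.inner_sub_le_sub_of_hasGradientAt (hf : ConvexOn ℝ Set.univ f)
    (hG : HasGradientAt f f' y) (x : E) : ⟪f', x - y⟫ ≤ f x - f y := by
  have hderiv := HasGradientAt.hasDerivAt_comp_lineMap (x := x) (t := 0) (by simpa using hG)
  simpa [slope] using (hf.comp_affineMap (AffineMap.lineMap y x)).le_slope_of_hasDerivAt
    trivial trivial one_pos hderiv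

lemma hasGradientAt_norm_sq (x : E) : HasGradientAt (fun z => ‖z‖ ^ 2) ((2 : ℝ) • x) x := by
  rw [hasGradientAt_iff_hasFDerivAt]
  refine (hasStrictFDerivAt_norm_sq x).hasFDerivAt.congr_fderiv ?_
  ext v
  simp

lemma StrongConvexOn.add_inner_add_le_of_hasGradientAt {μ : ℝ}
    (hf : StrongConvexOn Set.univ μ f) (hG : HasGradientAt f f' y) (x : E) :
    f y + ⟪f', x - y⟫ + μ / 2 * ‖x - y‖ ^ 2 ≤ f x := by
  have hsub := hG.add ((hasGradientAt_norm_sq y).const_mul (-(μ / 2)))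
  simp only [neg_mul, ← sub_eq_add_neg] at hsub
  have h := (strongConvexOn_iff_convex.mp hf).inner_sub_le_sub_of_hasGradientAt hsub x
  rw [norm_sub_sq_real, inner_sub_right]
  simp only [inner_add_left, real_inner_smul_left, inner_sub_right,
    real_inner_self_eq_norm_sq] at h
  linear_combination h + μ * real_inner_comm x y

lemma le_add_inner_add_of_lipschitz_gradient {G : E → E} {L : ℝ}
    (hG : ∀ z, HasGradientAt f (G z) z) (hlip : ∀ a b, ‖G a - G b‖ ≤ L * ‖a - b‖) (x y : E) :
    f x ≤ f y + ⟪G y, x - y⟫ + L / 2 * ‖x - y‖ ^ 2 := by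
  set φ : ℝ → ℝ := fun t =>
    f (AffineMap.lineMap y x t) - t * ⟪G y, x - y⟫ - L / 2 * t ^ 2 * ‖x - y‖ ^ 2
  have hφ : ∀ t, HasDerivAt φ (⟪G (AffineMap.lineMap y x t), x - y⟫ - ⟪G y, x - y⟫
      - L * t * ‖x - y‖ ^ 2) t := by
    intro t
    refine ((((hG _).hasDerivAt_comp_lineMap).sub ((hasDerivAt_id t).mul_const _)).sub
      (((hasDerivAt_pow 2 t).const_mul (L / 2)).mul_const (‖x - y‖ ^ 2))).congr_deriv ?_
    ring
  have hφ' : ∀ t ∈ interior (Set.Ici (0 : ℝ)), ⟪G (AffineMap.lineMap y x t), x - y⟫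
      - ⟪G y, x - y⟫ - L * t * ‖x - y‖ ^ 2 ≤ 0 := by
    intro t ht
    rw [interior_Ici, Set.mem_Ioi] at ht
    rw [sub_nonpos]
    have hdist : ‖AffineMap.lineMap y x t - y‖ = t * ‖x - y‖ := by
      rw [← vsub_eq_sub, AffineMap.lineMap_vsub_left, norm_smul, Real.norm_of_nonneg ht.le]
      rfl
    calc ⟪G (AffineMap.lineMap y x t), x - y⟫ - ⟪G y, x - y⟫
        = ⟪G (AffineMap.lineMap y x t) - G y, x - y⟫ := (inner_sub_left ..).symm
      _ ≤ ‖G (AffineMap.lineMap y x t) - G y‖ * ‖x - y‖ := real_inner_le_norm _ _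
      _ ≤ L * (t * ‖x - y‖) * ‖x - y‖ := by
          rw [← hdist]; exact mul_le_mul_of_nonneg_right (hlip _ _) (norm_nonneg _)
      _ = L * t * ‖x - y‖ ^ 2 := by ring
  have hanti : AntitoneOn φ (Set.Ici 0) :=
    antitoneOn_of_hasDerivWithinAt_nonpos (convex_Ici 0)
      (fun t _ => (hφ t).continuousAt.continuousWithinAt)
      (fun t _ => (hφ t).hasDerivWithinAt) hφ'
  have h01 := hanti Set.self_mem_Ici (Set.mem_Ici.mpr zero_le_one) zero_le_one
  simp only [φ, AffineMap.lineMap_apply_one, AffineMap.lineMap_apply_zero] at h01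
  linarith

end Calculus

section Interpolation

variable {E : Type*} [NormedAddCommGroup E] [InnerProductSpace ℝ E]

lemma interpolation_of_strongConvex_along_of_smooth {ξ : E → ℝ} {g : E → E}
    {P : E →ₗ[ℝ] E} {μ L : ℝ} (hP : IsIdempotentElem P) (hPsym : P.IsSymmetric)
    (hgP : ∀ a b, P (g a - g b) = g a - g b)
    (hsc : ∀ u v, ξ v + ⟪g v, u - v⟫ + μ / 2 * ‖P (u - v)‖ ^ 2 ≤ ξ u)
    (hsmooth : ∀ u v, ξ u ≤ ξ v + ⟪g v, u - v⟫ + L / 2 * ‖u - v‖ ^ 2)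
    (hμL : μ < L) (x y : E) :
    ξ y + ⟪g y, x - y⟫ + μ * L / (2 * (L - μ)) * ‖P (x - y)‖ ^ 2
      + 1 / (2 * (L - μ)) * ‖g x - g y‖ ^ 2 + μ / (L - μ) * ⟪g x - g y, y - x⟫ ≤ ξ x := by
  have ht : (L - μ) * (L - μ)⁻¹ = 1 := mul_inv_cancel₀ (sub_pos.mpr hμL).ne'
  set d := x - y
  set Δ := g x - g y
  set D := Δ - μ • P d
  have hPD : P D = D := by
    rw [map_sub, map_smul, hgP, ← Module.End.mul_apply, hP.eq]
  have hPΔd : ⟪Δ, P d⟫ = ⟪Δ, d⟫ := by rw [← hPsym, hgP]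
  -- `w` is the gradient step of length `(L - μ)⁻¹` from `x` for `ξ - μ/2 ‖P ·‖²`,
  -- tilted by a linear function so as to be stationary at `y`
  set w := x - (L - μ)⁻¹ • D
  have h1 := hsc w y
  have h2 := hsmooth w x
  have hwy : w - y = d - (L - μ)⁻¹ • D := by simp only [w, d]; abel
  have hwx : w - x = -((L - μ)⁻¹ • D) := by simp only [w]; abel
  rw [hwy, map_sub, map_smul, hPD, norm_sub_sq_real, inner_sub_right, norm_smul,
    real_inner_smul_right, real_inner_smul_right, Real.norm_eq_abs, mul_pow, sq_abs] at h1
  rw [hwx, norm_neg, inner_neg_right, norm_smul, real_inner_smul_right, Real.norm_eq_abs,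
    mul_pow, sq_abs] at h2
  have hΔD : ⟪Δ, D⟫ = ‖D‖ ^ 2 + μ * ⟪P d, D⟫ := by
    rw [← real_inner_self_eq_norm_sq, ← real_inner_smul_left, ← inner_add_left]
    simp only [D, sub_add_cancel]
  have hD : ‖D‖ ^ 2 = ‖Δ‖ ^ 2 - 2 * μ * ⟪Δ, d⟫ + μ ^ 2 * ‖P d‖ ^ 2 := by
    rw [norm_sub_sq_real, real_inner_smul_right, norm_smul, hPΔd, Real.norm_eq_abs, mul_pow,
      sq_abs]
    ring
  have hgΔ : ⟪g x, D⟫ - ⟪g y, D⟫ = ⟪Δ, D⟫ := (inner_sub_left ..).symm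
  have hyx : ⟪Δ, y - x⟫ = -⟪Δ, d⟫ := by rw [← inner_neg_right, neg_sub]
  rw [hyx, div_eq_mul_inv, div_eq_mul_inv, div_eq_mul_inv, mul_inv]
  linear_combination h1 + h2 - (L - μ)⁻¹ * hgΔ - (L - μ)⁻¹ * hΔD - (L - μ)⁻¹ / 2 * hD
    + ((L - μ)⁻¹ * ‖D‖ ^ 2 / 2 + μ * ‖P d‖ ^ 2 / 2) * ht

end Interpolation

section CoordMask

variable {ι : Type*} (q : ι → Prop) [DecidablePred q]

def coordMask : EuclideanSpace ℝ ι →ₗ[ℝ] EuclideanSpace ℝ ι where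
  toFun v := WithLp.toLp 2 fun j => if q j then v j else 0
  map_add' u v := by ext j; by_cases h : q j <;> simp [h]
  map_smul' c v := by ext j; by_cases h : q j <;> simp [h]

@[simp]
lemma coordMask_apply (v : EuclideanSpace ℝ ι) (j : ι) :
    coordMask q v j = if q j then v j else 0 := rfl

lemma isIdempotentElem_coordMask : IsIdempotentElem (coordMask q) := by
  ext v j
  simp only [Module.End.mul_apply, coordMask_apply]
  split_ifs <;> rfl

lemma isSymmetric_coordMask [Fintype ι] : (coordMask q).IsSymmetric := by
  intro u v
  simp only [PiLp.inner_apply, coordMask_apply, RCLike.inner_apply, conj_trivial]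
  congr 1 with j
  split_ifs <;> simp

lemma norm_sq_coordMask [Fintype ι] (v : EuclideanSpace ℝ ι) :
    ‖coordMask q v‖ ^ 2 = ∑ j with q j, v j ^ 2 := by
  simp [EuclideanSpace.real_norm_sq_eq, sum_filter, apply_ite (· ^ 2)]

lemma norm_coordMask_le [Fintype ι] (v : EuclideanSpace ℝ ι) : ‖coordMask q v‖ ≤ ‖v‖ := by
  refine (pow_le_pow_iff_left₀ (norm_nonneg _) (norm_nonneg _) two_ne_zero).mp ?_
  rw [norm_sq_coordMask, EuclideanSpace.real_norm_sq_eq]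
  exact sum_le_sum_of_subset_of_nonneg (filter_subset _ _) fun j _ _ => sq_nonneg _

variable {q} in
lemma coordMask_eq_self_iff {v : EuclideanSpace ℝ ι} :
    coordMask q v = v ↔ ∀ j, ¬ q j → v j = 0 := by
  simp only [WithLp.ext_iff, funext_iff, coordMask_apply]
  refine forall_congr' fun j => ?_
  split_ifs with hj <;> simp [hj, eq_comm]

end CoordMask

lemma EuclideanSpace.norm_le_of_forall_abs_le {ι : Type*} [Fintype ι]
    {u v : EuclideanSpace ℝ ι} {C : ℝ} (hC : 0 ≤ C) (h : ∀ j, |u j| ≤ C * |v j|) :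
    ‖u‖ ≤ C * ‖v‖ := by
  refine (pow_le_pow_iff_left₀ (norm_nonneg _) (by positivity) two_ne_zero).mp ?_
  rw [mul_pow, EuclideanSpace.real_norm_sq_eq, EuclideanSpace.real_norm_sq_eq, mul_sum]
  refine sum_le_sum fun j _ => ?_
  rw [← sq_abs, ← sq_abs (v j), ← mul_pow]
  exact pow_le_pow_left₀ (abs_nonneg _) (h j) 2

section BlockSeparable

variable {ι : Type*} {Bk : Type*} (blk : ι → Bk)

variable {blk} in
lemma HasGradientAt.apply_eq_zero_of_block [Fintype ι] {φ : EuclideanSpace ℝ ι → ℝ}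
    {G x : EuclideanSpace ℝ ι} {b : Bk}
    (hφ : ∀ x y : EuclideanSpace ℝ ι, (∀ j, blk j = b → x j = y j) → φ x = φ y)
    (hG : HasGradientAt φ G x) {j : ι} (hj : blk j ≠ b) : G j = 0 := by
  classical
  have h := hG.inner_eq_zero_of_forall_add_smul_eq (v := EuclideanSpace.single j 1)
    fun t => hφ _ _ fun j' hj' => by
      have : j' ≠ j := by rintro rfl; exact hj hj'
      simp [this]
  simpa [EuclideanSpace.inner_single_right] using h

variable [DecidableEq Bk]

lemma sum_apply_eq_ite_of_block {w : Bk → EuclideanSpace ℝ ι}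
    (hw : ∀ b j, blk j ≠ b → w b j = 0) (S : Finset Bk) (j : ι) :
    (∑ b ∈ S, w b) j = if blk j ∈ S then w (blk j) j else 0 := by
  rw [WithLp.ofLp_sum, Finset.sum_apply, ← sum_ite_eq S (blk j) fun b => w b j]
  refine sum_congr rfl fun b _ => ?_
  split_ifs with h
  · rfl
  · exact hw b j h

lemma norm_sq_coordMask_mem_eq_sum [Fintype ι] (S : Finset Bk) (z : EuclideanSpace ℝ ι) :
    ‖coordMask (blk · ∈ S) z‖ ^ 2 = ∑ b ∈ S, ‖coordMask (blk · = b) z‖ ^ 2 := by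
  simp only [norm_sq_coordMask, sum_filter]
  rw [sum_comm]
  exact sum_congr rfl fun j _ => (sum_ite_eq S (blk j) fun _ => z j ^ 2).symm

lemma norm_sq_eq_sum_norm_sq_coordMask [Fintype ι] [Fintype Bk] (z : EuclideanSpace ℝ ι) :
    ‖z‖ ^ 2 = ∑ b, ‖coordMask (blk · = b) z‖ ^ 2 := by
  simp only [EuclideanSpace.real_norm_sq_eq]
  rw [sum_comm]
  exact sum_congr rfl fun j _ => by simp

lemma norm_sum_smul_le_of_block [Fintype ι] [Fintype Bk] {w : Bk → EuclideanSpace ℝ ι}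
    (hw : ∀ b j, blk j ≠ b → w b j = 0) (S : Finset Bk) {c : Bk → ℝ} {C : ℝ}
    (hc : ∀ b ∈ S, |c b| ≤ C) (hC : 0 ≤ C) :
    ‖∑ b ∈ S, c b • w b‖ ≤ C * ‖∑ b, w b‖ := by
  refine EuclideanSpace.norm_le_of_forall_abs_le hC fun j => ?_
  have hcw : ∀ b j, blk j ≠ b → (c b • w b) j = 0 := fun b j hj => by simp [hw b j hj]
  rw [sum_apply_eq_ite_of_block blk hcw, sum_apply_eq_ite_of_block blk hw, if_pos (mem_univ _)]
  split_ifs with hj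
  · simpa [abs_mul] using mul_le_mul_of_nonneg_right (hc _ hj) (abs_nonneg (w (blk j) j))
  · simp only [abs_zero]; positivity

lemma StrongConvexOn.add_inner_add_le_of_block [Fintype ι] [Fintype Bk]
    {ωB : Bk → EuclideanSpace ℝ ι → ℝ} {GB : Bk → EuclideanSpace ℝ ι → EuclideanSpace ℝ ι}
    {μ : ℝ} (hblock : ∀ b x y, (∀ j, blk j = b → x j = y j) → ωB b x = ωB b y)
    (hGB : ∀ b x, HasGradientAt (ωB b) (GB b x) x)
    (hsc : StrongConvexOn Set.univ μ fun x => ∑ b, ωB b x) (b : Bk) (u v : EuclideanSpace ℝ ι) :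
    ωB b v + ⟪GB b v, u - v⟫ + μ / 2 * ‖coordMask (blk · = b) (u - v)‖ ^ 2 ≤ ωB b u := by
  set z := coordMask (blk · = b) (u - v)
  have h := hsc.add_inner_add_le_of_hasGradientAt (HasGradientAt.sum fun b' _ => hGB b' v) (v + z)
  rw [add_sub_cancel_left] at h
  -- moving `v` by `z` only changes the block `b`, where it lands on `u`
  have hval : ∑ b', (ωB b' (v + z) - ωB b' v) = ωB b u - ωB b v := by
    rw [sum_eq_single b]
    · congr 1
      exact hblock b _ _ fun j hj => by simp [z, hj]
    · intro b' _ hb'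
      rw [sub_eq_zero]
      refine hblock b' _ _ fun j hj => ?_
      simp [z, hj, hb']
    · simp
  have hinner : ⟪∑ b', GB b' v, z⟫ = ⟪GB b v, u - v⟫ := by
    rw [sum_inner, sum_eq_single b]
    · rw [← isSymmetric_coordMask, coordMask_eq_self_iff.mpr]
      exact fun j hj => (hGB b v).apply_eq_zero_of_block (hblock b) hj
    · intro b' _ hb'
      rw [← isSymmetric_coordMask]
      convert inner_zero_left (u - v)
      ext j
      simp only [coordMask_apply, PiLp.zero_apply, ite_eq_right_iff]
      rintro rfl
      exact (hGB b' v).apply_eq_zero_of_block (hblock b') (Ne.symm hb')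
    · simp
  rw [sum_sub_distrib] at hval
  linarith

lemma add_inner_add_le_of_weighted_blocks [Fintype ι] (S : Finset Bk) {ψ : EuclideanSpace ℝ ι → ℝ}
    {ωB : Bk → EuclideanSpace ℝ ι → ℝ} {Gψ : EuclideanSpace ℝ ι} {GB : Bk → EuclideanSpace ℝ ι}
    {c : Bk → ℝ} {μψ μω : ℝ} {u v : EuclideanSpace ℝ ι}
    (hψ : ψ v + ⟪Gψ, u - v⟫ + μψ / 2 * ‖u - v‖ ^ 2 ≤ ψ u) (hμψ : 0 ≤ μψ)
    (hB : ∀ b ∈ S, ωB b v + ⟪GB b, u - v⟫ + μω / 2 * ‖coordMask (blk · = b) (u - v)‖ ^ 2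
      ≤ ωB b u) (hμω : 0 ≤ μω) (hc : ∀ b ∈ S, 1 ≤ c b) :
    (ψ v + ∑ b ∈ S, c b * ωB b v) + ⟪Gψ + ∑ b ∈ S, c b • GB b, u - v⟫
      + (μψ + μω) / 2 * ‖coordMask (blk · ∈ S) (u - v)‖ ^ 2 ≤ ψ u + ∑ b ∈ S, c b * ωB b u := by
  have hblocks : ∀ b ∈ S, c b * ωB b v + c b * ⟪GB b, u - v⟫
      + μω / 2 * ‖coordMask (blk · = b) (u - v)‖ ^ 2 ≤ c b * ωB b u := by
    intro b hb
    have hm : 0 ≤ μω / 2 * ‖coordMask (blk · = b) (u - v)‖ ^ 2 := by positivity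
    nlinarith [hB b hb, hc b hb]
  have hsum := sum_le_sum hblocks
  rw [sum_add_distrib, sum_add_distrib, ← mul_sum, ← norm_sq_coordMask_mem_eq_sum] at hsum
  have hmask : μψ / 2 * ‖coordMask (blk · ∈ S) (u - v)‖ ^ 2 ≤ μψ / 2 * ‖u - v‖ ^ 2 :=
    mul_le_mul_of_nonneg_left (pow_le_pow_left₀ (norm_nonneg _) (norm_coordMask_le _ _) 2)
      (by positivity)
  simp only [inner_add_left, sum_inner, real_inner_smul_left]
  linarith

lemma interpolation_of_weighted_blocks [Fintype ι] [Fintype Bk] (S : Finset Bk)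
    {ψ ξ : EuclideanSpace ℝ ι → ℝ} {Gψ g : EuclideanSpace ℝ ι → EuclideanSpace ℝ ι}
    {ωB : Bk → EuclideanSpace ℝ ι → ℝ} {GB : Bk → EuclideanSpace ℝ ι → EuclideanSpace ℝ ι}
    {c : Bk → ℝ} {C Lψ Lω μψ μω : ℝ}
    (hψ : ∀ x, HasGradientAt ψ (Gψ x) x) (hψlip : ∀ x y, ‖Gψ x - Gψ y‖ ≤ Lψ * ‖x - y‖)
    (hψsc : StrongConvexOn Set.univ μψ ψ) (hμψ : 0 ≤ μψ) (hψS : ∀ x j, blk j ∉ S → Gψ x j = 0)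
    (hblock : ∀ b x y, (∀ j, blk j = b → x j = y j) → ωB b x = ωB b y)
    (hGB : ∀ b x, HasGradientAt (ωB b) (GB b x) x)
    (hωlip : ∀ x y, ‖∑ b, GB b x - ∑ b, GB b y‖ ≤ Lω * ‖x - y‖)
    (hωsc : StrongConvexOn Set.univ μω fun x => ∑ b, ωB b x) (hμω : 0 ≤ μω)
    (hc : ∀ b, 1 ≤ c b) (hcC : ∀ b, c b ≤ C) (hC : 0 ≤ C) (hμL : μψ + μω < Lψ + C * Lω)
    (hξ : ∀ x, ξ x = ψ x + ∑ b ∈ S, c b * ωB b x)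
    (hg : ∀ x, g x = Gψ x + ∑ b ∈ S, c b • GB b x) (x y : EuclideanSpace ℝ ι) :
    ξ y + ⟪g y, x - y⟫
      + (μψ + μω) * (Lψ + C * Lω) / (2 * (Lψ + C * Lω - (μψ + μω)))
        * ‖coordMask (blk · ∈ S) (x - y)‖ ^ 2
      + 1 / (2 * (Lψ + C * Lω - (μψ + μω))) * ‖g x - g y‖ ^ 2
      + (μψ + μω) / (Lψ + C * Lω - (μψ + μω)) * ⟪g x - g y, y - x⟫ ≤ ξ x := by
  have hGBS : ∀ x b j, blk j ≠ b → GB b x j = 0 := fun x b _ hj =>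
    (hGB b x).apply_eq_zero_of_block (hblock b) hj
  have hgrad : ∀ x, HasGradientAt ξ (g x) x := fun x => by
    rw [funext hξ, hg]
    exact (hψ x).add_sum_const_mul c fun b _ => hGB b x
  have hlip : ∀ x y, ‖g x - g y‖ ≤ (Lψ + C * Lω) * ‖x - y‖ := by
    intro x y
    have hsplit : g x - g y = (Gψ x - Gψ y) + ∑ b ∈ S, c b • (GB b x - GB b y) := by
      simp only [hg, smul_sub, sum_sub_distrib]; abel
    have hblocks := norm_sum_smul_le_of_block blk (w := fun b => GB b x - GB b y)
      (fun b j hj => by simp [hGBS x b j hj, hGBS y b j hj]) S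
      (fun b _ => abs_le.mpr ⟨by linarith [hc b], hcC b⟩) hC
    rw [sum_sub_distrib] at hblocks
    calc ‖g x - g y‖ ≤ ‖Gψ x - Gψ y‖ + ‖∑ b ∈ S, c b • (GB b x - GB b y)‖ :=
          hsplit ▸ norm_add_le _ _
      _ ≤ Lψ * ‖x - y‖ + C * (Lω * ‖x - y‖) :=
          add_le_add (hψlip x y) (hblocks.trans (mul_le_mul_of_nonneg_left (hωlip x y) hC))
      _ = (Lψ + C * Lω) * ‖x - y‖ := by ring
  have hsupp : ∀ x y, coordMask (blk · ∈ S) (g x - g y) = g x - g y := by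
    have hgS : ∀ x j, blk j ∉ S → g x j = 0 := fun x j hj => by
      rw [hg, PiLp.add_apply, hψS x j hj, zero_add,
        sum_apply_eq_ite_of_block blk (fun b j hj => by simp [hGBS x b j hj]), if_neg hj]
    exact fun x y => coordMask_eq_self_iff.mpr fun j hj => by simp [hgS x j hj, hgS y j hj]
  have hsc : ∀ u v, ξ v + ⟪g v, u - v⟫ + (μψ + μω) / 2 * ‖coordMask (blk · ∈ S) (u - v)‖ ^ 2
      ≤ ξ u := fun u v => by
    rw [hξ, hξ, hg]
    exact add_inner_add_le_of_weighted_blocks blk S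
      (hψsc.add_inner_add_le_of_hasGradientAt (hψ v) u) hμψ (fun b _ => hωsc.add_inner_add_le_of_block blk hblock hGB b u v) hμω fun b _ => hc b
  exact interpolation_of_strongConvex_along_of_smooth (isIdempotentElem_coordMask _)
    (isSymmetric_coordMask _) hsupp hsc (le_add_inner_add_of_lipschitz_gradient hgrad hlip) hμL x y

end BlockSeparable

section Reweighting

variable {κ Bk : Type*} [Fintype κ] [DecidableEq Bk] {T : κ → Finset Bk}

lemma sum_sum_mem_eq_sum_card_smul [Fintype Bk] (T : κ → Finset Bk) {M : Type*} [AddCommMonoid M]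
    (a : Bk → M) : ∑ i, ∑ b ∈ T i, a b = ∑ b, #{i | b ∈ T i} • a b := by
  rw [sum_comm' (t' := univ) (s' := fun b => {i | b ∈ T i}) (by simp)]
  simp [sum_const]

lemma card_filter_mem_pos {b : Bk} (hb : ∃ i, b ∈ T i) : 0 < #{i | b ∈ T i} := by
  obtain ⟨i, hi⟩ := hb
  exact card_pos.mpr ⟨i, mem_filter.mpr ⟨mem_univ i, hi⟩⟩

lemma one_le_card_div_card_filter_mem {b : Bk} (hb : ∃ i, b ∈ T i) :
    1 ≤ (Fintype.card κ : ℝ) / #{i | b ∈ T i} := by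
  rw [one_le_div (by exact_mod_cast card_filter_mem_pos hb)]
  exact_mod_cast card_le_univ _

variable {d : Bk → ℝ} {N : ℝ}

lemma card_filter_mem_mul_eq (hT : ∀ b, ∃ i, b ∈ T i) (hd : ∀ b, d b = N / #{i | b ∈ T i})
    (b : Bk) : #{i | b ∈ T i} * d b = N := by
  rw [hd, mul_div_cancel₀ _ (by exact_mod_cast (card_filter_mem_pos (hT b)).ne')]

lemma sum_sum_mem_mul_eq_mul_sum [Fintype Bk] (hT : ∀ b, ∃ i, b ∈ T i)
    (hd : ∀ b, d b = N / #{i | b ∈ T i}) (a : Bk → ℝ) : ∑ i, ∑ b ∈ T i, d b * a b = N * ∑ b, a b := by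
  rw [sum_sum_mem_eq_sum_card_smul, mul_sum]
  refine sum_congr rfl fun b _ => ?_
  rw [nsmul_eq_mul, ← mul_assoc, card_filter_mem_mul_eq hT hd]

lemma div_mul_norm_sq_le_sum_norm_sq_coordMask [Fintype Bk] {ι : Type*} [Fintype ι]
    (blk : ι → Bk) {D : ℝ}
    (hT : ∀ b, ∃ i, b ∈ T i) (hd : ∀ b, d b = N / #{i | b ∈ T i}) (hdD : ∀ b, d b ≤ D)
    (hD : 0 < D) (z : EuclideanSpace ℝ ι) :
    N / D * ‖z‖ ^ 2 ≤ ∑ i, ‖coordMask (blk · ∈ T i) z‖ ^ 2 := by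
  simp only [norm_sq_coordMask_mem_eq_sum, sum_sum_mem_eq_sum_card_smul, nsmul_eq_mul]
  rw [norm_sq_eq_sum_norm_sq_coordMask blk, mul_sum]
  refine sum_le_sum fun b _ => mul_le_mul_of_nonneg_right ?_ (sq_nonneg _)
  have hpos : (0 : ℝ) < #{i | b ∈ T i} := by exact_mod_cast card_filter_mem_pos (hT b)
  exact (div_le_comm₀ hD hpos).mpr (hd b ▸ hdD b)

end Reweighting

lemma StrongConvexOnR.strongConvexOn {μ : ℝ} {f : EuclideanSpace ℝ (Fin p) → ℝ}
    (hf : StrongConvexOnR μ f) : StrongConvexOn Set.univ μ f :=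
  ⟨convex_univ, fun x _ y _ a b ha hb hab => by
    simpa only [smul_eq_mul, mul_comm (a * b), mul_assoc] using hf x y a b ha hb hab⟩

theorem strong_convexity_inequality_general
    {n : ℕ}
    {Bk : Type} [Fintype Bk] [DecidableEq Bk] (blk : Fin p → Bk)
    (ψ : Fin n → EuclideanSpace ℝ (Fin p) → ℝ)
    (gradψ : Fin n → EuclideanSpace ℝ (Fin p) → EuclideanSpace ℝ (Fin p))
    (Lψ μψ : ℝ)
    (hψdiff : ∀ i x, HasGradientAt (ψ i) (gradψ i x) x)
    (hψlip : ∀ i x y, ‖gradψ i x - gradψ i y‖ ≤ Lψ * ‖x - y‖)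
    (hψsc : ∀ i, StrongConvexOnR μψ (ψ i))
    (hμψ : 0 ≤ μψ)
    (ωB : Bk → EuclideanSpace ℝ (Fin p) → ℝ)
    (hωB_block : ∀ b x y, (∀ j, blk j = b → x j = y j) → ωB b x = ωB b y)
    (gradωB : Bk → EuclideanSpace ℝ (Fin p) → EuclideanSpace ℝ (Fin p))
    (hωBdiff : ∀ b x, HasGradientAt (ωB b) (gradωB b x) x)
    (ω : EuclideanSpace ℝ (Fin p) → ℝ)
    (hω : ∀ x, ω x = ∑ b, ωB b x)
    (gradω : EuclideanSpace ℝ (Fin p) → EuclideanSpace ℝ (Fin p))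
    (hωdiff : ∀ x, HasGradientAt ω (gradω x) x)
    (Lω μω : ℝ)
    (hωlip : ∀ x y, ‖gradω x - gradω y‖ ≤ Lω * ‖x - y‖)
    (hωsc : StrongConvexOnR μω ω)
    (hμω : 0 ≤ μω)
    -- extended supports and reweighting constants
    (T : Fin n → Finset Bk)
    (hTsupp : ∀ i x j, blk j ∉ T i → gradψ i x j = 0)
    (hTcover : ∀ b, ∃ i, b ∈ T i)
    (dB : Bk → ℝ)
    (hdB : ∀ b, dB b = (n : ℝ) / ((univ.filter (fun i : Fin n => b ∈ T i)).card : ℝ))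
    (dmax : ℝ) (hdmax : IsGreatest (Set.range dB) dmax)
    (Lf μ : ℝ) (hLf : Lf = Lψ + dmax * Lω) (hμ : μ = μψ + μω) (hμlt : μ < Lf)
    (f : EuclideanSpace ℝ (Fin p) → ℝ)
    (hf : ∀ x, f x = (n : ℝ)⁻¹ * ∑ i, ψ i x + ω x)
    (gradf : EuclideanSpace ℝ (Fin p) → EuclideanSpace ℝ (Fin p))
    (hfdiff : ∀ x, HasGradientAt f (gradf x) x)
    (gradξ : Fin n → EuclideanSpace ℝ (Fin p) → EuclideanSpace ℝ (Fin p))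
    (hgradξ : ∀ i x, gradξ i x = gradψ i x + ∑ b ∈ T i, dB b • gradωB b x) :
    ∀ x y : EuclideanSpace ℝ (Fin p),
      f y + ⟪gradf y, x - y⟫
        + (1 / (2 * n * (Lf - μ))) * ∑ i, ‖gradξ i x - gradξ i y‖ ^ 2
        + (μ * Lf / (2 * dmax * (Lf - μ))) * ‖x - y‖ ^ 2
        + (μ / (Lf - μ)) * ⟪gradf x - gradf y, y - x⟫
      ≤ f x := by
  intro x y
  have hdB1 : ∀ b, 1 ≤ dB b := fun b => by
    simpa [hdB] using one_le_card_div_card_filter_mem (hTcover b)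
  have hdBmax : ∀ b, dB b ≤ dmax := fun b => hdmax.2 ⟨b, rfl⟩
  obtain ⟨b₀, hb₀⟩ := hdmax.1
  have hn : (0 : ℝ) < n := by exact_mod_cast (hTcover b₀).choose.pos
  have hdmax_pos : 0 < dmax := hb₀ ▸ one_pos.trans_le (hdB1 b₀)
  set ξ := fun i z => ψ i z + ∑ b ∈ T i, dB b * ωB b z
  have hfξ : f = fun z => (n : ℝ)⁻¹ * ∑ i, ξ i z := funext fun z => by
    rw [hf, hω]
    simp only [ξ, sum_add_distrib, sum_sum_mem_mul_eq_mul_sum hTcover hdB]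
    field_simp
  have hgradf : ∀ z, gradf z = (n : ℝ)⁻¹ • ∑ i, gradξ i z := fun z => by
    refine (hfdiff z).unique ?_
    rw [hfξ]
    exact (HasGradientAt.sum fun i _ => hgradξ i z ▸
      (hψdiff i z).add_sum_const_mul dB fun b _ => hωBdiff b z).const_mul _
  have hgradω : ∀ z, gradω z = ∑ b, gradωB b z := fun z =>
    (hωdiff z).unique (funext hω ▸ HasGradientAt.sum fun b _ => hωBdiff b z)
  have hkey := fun i => interpolation_of_weighted_blocks blk (T i) (hψdiff i) (hψlip i)
    (hψsc i).strongConvexOn hμψ (hTsupp i) hωB_block hωBdiff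
    (fun x y => hgradω x ▸ hgradω y ▸ hωlip x y) (funext hω ▸ hωsc.strongConvexOn) hμω
    hdB1 hdBmax hdmax_pos.le (hLf ▸ hμ ▸ hμlt) (fun z => rfl) (hgradξ i) x y
  have hmask := div_mul_norm_sq_le_sum_norm_sq_coordMask blk hTcover hdB hdBmax hdmax_pos (x - y)
  have hsum := sum_le_sum fun i (_ : i ∈ univ) => hkey i
  simp only [← hLf, ← hμ, sum_add_distrib, ← mul_sum] at hsum
  rw [hfξ, hgradf, hgradf, ← smul_sub, ← sum_sub_distrib, real_inner_smul_left,
    real_inner_smul_left, sum_inner, sum_inner]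
  simp only [ξ, sum_add_distrib]
  have hμ0 : 0 ≤ μ := hμ ▸ add_nonneg hμψ hμω
  have hcoef : 0 ≤ (n : ℝ)⁻¹ * (μ * Lf / (2 * (Lf - μ))) := mul_nonneg (inv_nonneg.mpr hn.le)
    (div_nonneg (mul_nonneg hμ0 (hμ0.trans hμlt.le)) (by linarith))
  have hnn : (n : ℝ)⁻¹ * n = 1 := inv_mul_cancel₀ hn.ne'
  generalize Lf - μ = K at hsum hcoef ⊢
  linear_combination (n : ℝ)⁻¹ * hsum + mul_le_mul_of_nonneg_left hmask hcoef
    - μ * Lf / (2 * K * dmax) * ‖x - y‖ ^ 2 * hnn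

/-- strong convexity inequality.  With `f = (1/n)∑ᵢ ψᵢ + ω`, each `ψᵢ`
`μ_ψ`-strongly convex and `L_ψ`-smooth, `ω` `μ_ω`-strongly convex, `L_ω`-smooth and block
separable, `ξᵢ(x) = ψᵢ(x) + ∑_{B∈Tᵢ} d_B ω_B([x]_B)`, `μ = μ_ψ + μ_ω`, and
`L_f = L_ψ + d_max L_ω`, for all `x, y`:
`f(x) ≥ f(y) + ⟨∇f(y), x−y⟩ + (1/(2n(L_f−μ))) ∑ᵢ ‖∇ξᵢ(x) − ∇ξᵢ(y)‖²
  + (μ L_f/(2 d_max (L_f−μ))) ‖x−y‖² + (μ/(L_f−μ)) ⟨∇f(x) − ∇f(y), y−x⟩`. -/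
theorem strong_convexity_inequality
    {n : ℕ} (hn : 0 < n)
    {Bk : Type} [Fintype Bk] [DecidableEq Bk] (blk : Fin p → Bk)
    (ψ : Fin n → EuclideanSpace ℝ (Fin p) → ℝ)
    (gradψ : Fin n → EuclideanSpace ℝ (Fin p) → EuclideanSpace ℝ (Fin p))
    (Lψ μψ : ℝ)
    (hψdiff : ∀ i x, HasGradientAt (ψ i) (gradψ i x) x)
    (hψlip : ∀ i x y, ‖gradψ i x - gradψ i y‖ ≤ Lψ * ‖x - y‖)
    (hψsc : ∀ i, StrongConvexOnR μψ (ψ i))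
    (hμψ : 0 ≤ μψ)
    (ωB : Bk → EuclideanSpace ℝ (Fin p) → ℝ)
    (hωB_block : ∀ b x y, (∀ j, blk j = b → x j = y j) → ωB b x = ωB b y)
    (gradωB : Bk → EuclideanSpace ℝ (Fin p) → EuclideanSpace ℝ (Fin p))
    (hωBdiff : ∀ b x, HasGradientAt (ωB b) (gradωB b x) x)
    (ω : EuclideanSpace ℝ (Fin p) → ℝ)
    (hω : ∀ x, ω x = ∑ b, ωB b x)
    (gradω : EuclideanSpace ℝ (Fin p) → EuclideanSpace ℝ (Fin p))
    (hωdiff : ∀ x, HasGradientAt ω (gradω x) x)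
    (Lω μω : ℝ)
    (hωlip : ∀ x y, ‖gradω x - gradω y‖ ≤ Lω * ‖x - y‖)
    (hωsc : StrongConvexOnR μω ω)
    (hμω : 0 ≤ μω)
    -- extended supports and reweighting constants
    (T : Fin n → Finset Bk)
    (hTsupp : ∀ i x j, blk j ∉ T i → gradψ i x j = 0)
    (hTcover : ∀ b, ∃ i, b ∈ T i)
    (dB : Bk → ℝ)
    (hdB : ∀ b, dB b = (n : ℝ) / ((univ.filter (fun i : Fin n => b ∈ T i)).card : ℝ))
    (dmax : ℝ) (hdmax : IsGreatest (Set.range dB) dmax)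
    (Lf μ : ℝ) (hLf : Lf = Lψ + dmax * Lω) (hμ : μ = μψ + μω) (hμlt : μ < Lf)
    (f : EuclideanSpace ℝ (Fin p) → ℝ)
    (hf : ∀ x, f x = (n : ℝ)⁻¹ * ∑ i, ψ i x + ω x)
    (gradf : EuclideanSpace ℝ (Fin p) → EuclideanSpace ℝ (Fin p))
    (hfdiff : ∀ x, HasGradientAt f (gradf x) x)
    (gradξ : Fin n → EuclideanSpace ℝ (Fin p) → EuclideanSpace ℝ (Fin p))
    (hgradξ : ∀ i x, gradξ i x = gradψ i x + ∑ b ∈ T i, dB b • gradωB b x) :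
    ∀ x y : EuclideanSpace ℝ (Fin p),
      f y + ⟪gradf y, x - y⟫
        + (1 / (2 * n * (Lf - μ))) * ∑ i, ‖gradξ i x - gradξ i y‖ ^ 2
        + (μ * Lf / (2 * dmax * (Lf - μ))) * ‖x - y‖ ^ 2
        + (μ / (Lf - μ)) * ⟪gradf x - gradf y, y - x⟫
      ≤ f x :=
  strong_convexity_inequality_general blk ψ gradψ Lψ μψ hψdiff hψlip hψsc hμψ ωB hωB_block gradωB
    hωBdiff ω hω gradω hωdiff Lω μω hωlip hωsc hμω T hTsupp hTcover dB hdB dmax hdmax Lf μ hLf hμ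
    hμlt f hf gradf hfdiff gradξ hgradξ
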